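/- (Correctness of the reduction underlying Theorem 1.) Let (u_α, v_α)_{α∈[d]} be a Post correspondence instance over a finite alphabet Σ of size b ≥ 1, let λ ∈ ℚ, and let A^{(1)},…,A^{(d)} ∈ ℕ^{6×6}, L = e₆, R = e₁ − e₂ + e₃ − (λ+1)e₆ be the encoding matrices and boundary vectors of Lemma 1 (built from the numeric representation σ). Define the MPO tensor M by M^{(α,β)} := δ_{α,β} A^{(α)}. Then for every n ≥ 1: the operator ρ(L,M,R,n) + λ𝟙 on (ℚ^d)^{⊗n} is positive semidefinite if and only if there is no word w ∈ [d]^n with U(w) = V(w). -/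

import Mathlib

/-- The numeric representation `σ : Σ* → ℕ` associated with an enumeration
bijection `e : Σ ≃ Fin b` (so that `σ₀(a) = e(a) + 1 ∈ {1,…,b}`):
`σ(w) = Σ_{j=1}^{|w|} σ₀(w_j) · b^{|w|−j}`, with `σ(∅) = 0`. -/
def numRep {S : Type*} (b : ℕ) (e : S ≃ Fin b) (w : List S) : ℕ :=
  ∑ j : Fin w.length, ((e (w.get j) : ℕ) + 1) * b ^ (w.length - 1 - (j : ℕ))

/-- The 6×6 integer encoding matrix `A(u,v)` built from the numeric representation `σ`. -/
def encMat {S : Type*} (b : ℕ) (e : S ≃ Fin b) (u v : List S) :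
    Matrix (Fin 6) (Fin 6) ℤ :=
  !![(b : ℤ) ^ (2 * u.length), 0, 0, 0, 0, 0;
     0, (b : ℤ) ^ (u.length + v.length), 0, 0, 0, 0;
     0, 0, (b : ℤ) ^ (2 * v.length), 0, 0, 0;
     (numRep b e u : ℤ) * (b : ℤ) ^ u.length, (numRep b e v : ℤ) * (b : ℤ) ^ u.length, 0,
       (b : ℤ) ^ u.length, 0, 0;
     0, (numRep b e u : ℤ) * (b : ℤ) ^ v.length, (numRep b e v : ℤ) * (b : ℤ) ^ v.length, 0,
       (b : ℤ) ^ v.length, 0;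
     (numRep b e u : ℤ) ^ 2, 2 * (numRep b e u : ℤ) * (numRep b e v : ℤ), (numRep b e v : ℤ) ^ 2,
       2 * (numRep b e u : ℤ), 2 * (numRep b e v : ℤ), 1]

/-- The rational 6×6 encoding matrices `A^{(α)} = A(u_α, v_α)` of a PCP instance. -/
def encMatQ {S : Type*} (b : ℕ) (e : S ≃ Fin b) {d : ℕ} (u v : Fin d → List S)
    (α : Fin d) : Matrix (Fin 6) (Fin 6) ℚ :=
  (encMat b e (u α) (v α)).map (Int.cast : ℤ → ℚ)

/-- The boundary vector `L = e₆ ∈ ℚ⁶` (sixth standard basis vector). -/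
def bndL : Fin 6 → ℚ := Pi.single 5 1

/-- The boundary vector `R = e₁ − e₂ + e₃ − (λ+1)e₆ ∈ ℚ⁶`. -/
def bndR (lam : ℚ) : Fin 6 → ℚ :=
  (Pi.single 0 1 : Fin 6 → ℚ) - (Pi.single 1 1 : Fin 6 → ℚ)
    + (Pi.single 2 1 : Fin 6 → ℚ) - (lam + 1) • (Pi.single 5 1 : Fin 6 → ℚ)

/-- The translation-invariant matrix product operator `ρ(L,M,R,n)` on `(ℚ^d)^{⊗n}`
generated by the MPO tensor `M = (M^{(α,β)}_{i,j})` and boundary vectors `L, R ∈ ℚ^D`: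
`ρ(L,M,R,n) = Σ_{j ∈ [D]^{n+1}} L_{j₁} M_{j₁,j₂} ⊗ ⋯ ⊗ M_{j_n,j_{n+1}} R_{j_{n+1}}`,
written entrywise in the standard tensor-product basis of `(ℚ^d)^{⊗n}`. -/
def mpo {d D : ℕ} (L R : Fin D → ℚ) (M : Fin d → Fin d → Matrix (Fin D) (Fin D) ℚ)
    (n : ℕ) : Matrix (Fin n → Fin d) (Fin n → Fin d) ℚ :=
  fun a c => ∑ j : Fin (n + 1) → Fin D,
    L (j 0) * (∏ t : Fin n, M (a t) (c t) (j t.castSucc) (j t.succ)) * R (j (Fin.last n))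

/-- The diagonal MPO tensor `M^{(α,β)} = δ_{α,β} A^{(α)}` built from the encoding
matrices of a PCP instance. -/
def pcpTensor {S : Type*} (b : ℕ) (e : S ≃ Fin b) {d : ℕ} (u v : Fin d → List S)
    (α β : Fin d) : Matrix (Fin 6) (Fin 6) ℚ :=
  if α = β then encMatQ b e u v α else 0

/-!
Right multiplication by `A(u, v)` sends the monomial vector `(s², 2st, t², 2s, 2t, 1)` of `(s, t)`
to that of `(s b^|u| + σ(u), t b^|v| + σ(v))`, so it turns `(σ(x), σ(y))` into `(σ(xu), σ(yv))`.
As `L` is the monomial vector of `(0, 0)` and `M` is diagonal, `ρ(L,M,R,n)` is diagonal with entry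
`(σ(U w) - σ(V w))² - (λ + 1)` at the word `w`. Hence `ρ + λ𝟙` is positive semidefinite iff
`(σ(U w) - σ(V w))² ≥ 1` for all `w`, i.e. iff `σ(U w) ≠ σ(V w)`, and `σ` (bijective base-`b`
numeration) is injective.
-/

open Matrix

theorem sum_paths_eq_vecMul_prod_dotProduct {α ι : Type*} [CommSemiring α] [Fintype ι]
    [DecidableEq ι] (n : ℕ) (L R : ι → α) (N : Fin n → Matrix ι ι α) :
    ∑ j : Fin (n + 1) → ι, L (j 0) * (∏ t, N t (j t.castSucc) (j t.succ)) * R (j (Fin.last n))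
      = L ᵥ* (List.ofFn N).prod ⬝ᵥ R := by
  induction n generalizing L with
  | zero =>
    rw [← (Equiv.funUnique (Fin 1) ι).symm.sum_comp]
    simp [dotProduct]
  | succ n ih =>
    rw [List.ofFn_succ, List.prod_cons, ← vecMul_vecMul, ← ih,
      ← (Fin.consEquiv fun _ => ι).sum_comp, Fintype.sum_prod_type, Finset.sum_comm]
    refine Finset.sum_congr rfl fun j _ => ?_
    simp only [Fin.consEquiv_apply, Fin.prod_univ_succ, Fin.castSucc_zero, Fin.cons_zero,
      Fin.cons_succ, ← Fin.succ_castSucc, ← Fin.succ_last, vecMul, dotProduct, Finset.sum_mul]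
    exact Finset.sum_congr rfl fun k _ => by ring

theorem mpo_eq_diagonal {d D : ℕ} (L R : Fin D → ℚ)
    (M : Fin d → Fin d → Matrix (Fin D) (Fin D) ℚ) (hM : ∀ α β, α ≠ β → M α β = 0) (n : ℕ) :
    mpo L R M n = diagonal fun a => L ᵥ* (List.ofFn fun t => M (a t) (a t)).prod ⬝ᵥ R := by
  ext a c
  by_cases hac : a = c
  · subst hac
    simp only [mpo, diagonal_apply_eq, sum_paths_eq_vecMul_prod_dotProduct]
  · obtain ⟨t, ht⟩ := Function.ne_iff.mp hac
    rw [diagonal_apply_ne _ hac]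
    refine Finset.sum_eq_zero fun j _ => ?_
    rw [Finset.prod_eq_zero (Finset.mem_univ t) (by simp [hM _ _ ht]), mul_zero, zero_mul]

theorem forall_dotProduct_diagonal_mulVec_nonneg_iff {R ι : Type*} [CommRing R] [PartialOrder R]
    [StarRing R] [TrivialStar R] [StarOrderedRing R] [Fintype ι] [DecidableEq ι] {f : ι → R} :
    (∀ x : ι → R, 0 ≤ x ⬝ᵥ (diagonal f *ᵥ x)) ↔ ∀ i, 0 ≤ f i := by
  refine Iff.trans ?_ posSemidef_diagonal_iff
  rw [posSemidef_iff_dotProduct_mulVec]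
  simp

theorem sq_natCast_sub_sub_one_nonneg_iff (p q : ℕ) : 0 ≤ ((p : ℚ) - q) ^ 2 - 1 ↔ p ≠ q := by
  constructor
  · rintro h rfl
    norm_num at h
  · intro hpq
    have h : (1 : ℚ) ≤ |(p : ℚ) - q| := by
      exact_mod_cast Int.one_le_abs (sub_ne_zero.2 (Int.ofNat_inj.not.2 hpq))
    nlinarith [sq_abs ((p : ℚ) - q)]

section NumRep

variable {S : Type*} {b : ℕ} (e : S ≃ Fin b)

@[simp]
theorem numRep_nil : numRep b e [] = 0 := by
  simp [numRep]

theorem numRep_cons (a : S) (w : List S) :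
    numRep b e (a :: w) = ((e a : ℕ) + 1) * b ^ w.length + numRep b e w := by
  simp only [numRep, List.length_cons, Fin.sum_univ_succ, List.get_eq_getElem, Fin.val_zero,
    Fin.val_succ, List.getElem_cons_zero, List.getElem_cons_succ]
  simp [Nat.sub_sub, Nat.add_comm 1]

theorem numRep_append (x y : List S) :
    numRep b e (x ++ y) = numRep b e x * b ^ y.length + numRep b e y := by
  induction x with
  | nil => simp
  | cons a x ih =>
    rw [List.cons_append, numRep_cons, ih, numRep_cons, List.length_append, pow_add]
    ring

theorem numRep_append_singleton (w : List S) (a : S) :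
    numRep b e (w ++ [a]) = numRep b e w * b + (e a + 1) := by
  simp [numRep_append, numRep_cons]

theorem numRep_injective : Function.Injective (numRep b e) := by
  intro x
  induction x using List.reverseRecOn with
  | nil =>
    intro y hy
    rcases List.eq_nil_or_concat' y with rfl | ⟨y, c, rfl⟩
    · rfl
    · simp [numRep_append_singleton] at hy
  | append_singleton x a ih =>
    intro y hxy
    rcases List.eq_nil_or_concat' y with rfl | ⟨y, c, rfl⟩
    · simp [numRep_append_singleton] at hxy
    rw [numRep_append_singleton, numRep_append_singleton] at hxy
    have hb : 0 < b := (e a).pos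
    -- `σ(x a) - 1 = σ(x) b + e(a)` with `e(a) < b`: division by `b` recovers `σ(x)` and `a`
    have hsame : (e a : ℕ) + numRep b e x * b = e c + numRep b e y * b := by omega
    have hrem : (e a : ℕ) = e c := by
      simpa [Nat.mod_eq_of_lt] using congrArg (· % b) hsame
    have hquot : numRep b e x = numRep b e y := by
      simpa [Nat.add_mul_div_right _ _ hb, Nat.div_eq_of_lt] using congrArg (· / b) hsame
    rw [ih hquot, e.injective (Fin.ext hrem)]

end NumRep

def quadVec (s t : ℚ) : Fin 6 → ℚ := ![s ^ 2, 2 * s * t, t ^ 2, 2 * s, 2 * t, 1]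

theorem bndL_eq_quadVec : bndL = quadVec 0 0 := by
  ext j
  fin_cases j <;> simp [bndL, quadVec]

theorem quadVec_dotProduct_bndR (lam s t : ℚ) :
    quadVec s t ⬝ᵥ bndR lam = (s - t) ^ 2 - (lam + 1) := by
  simp [dotProduct, quadVec, bndR, Fin.sum_univ_six, Pi.single_apply]
  ring

theorem quadVec_vecMul_encMatQ {S : Type*} (b : ℕ) (e : S ≃ Fin b) {d : ℕ}
    (u v : Fin d → List S) (α : Fin d) (s t : ℚ) :
    quadVec s t ᵥ* encMatQ b e u v α =
      quadVec (s * b ^ (u α).length + numRep b e (u α))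
        (t * b ^ (v α).length + numRep b e (v α)) := by
  ext j
  fin_cases j <;>
    simp [vecMul, dotProduct, encMatQ, encMat, quadVec, Fin.sum_univ_six, pow_add] <;> ring

theorem bndL_vecMul_prod_encMatQ {S : Type*} (b : ℕ) (e : S ≃ Fin b) {d : ℕ}
    (u v : Fin d → List S) (w : List (Fin d)) :
    bndL ᵥ* (w.map (encMatQ b e u v)).prod =
      quadVec (numRep b e (w.map u).flatten) (numRep b e (w.map v).flatten) := by
  induction w using List.reverseRecOn with
  | nil => simp [bndL_eq_quadVec]
  | append_singleton w α ih =>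
    simp only [List.map_append, List.prod_append, List.flatten_append, List.map_singleton,
      List.prod_singleton, List.flatten_singleton, ← vecMul_vecMul, ih, quadVec_vecMul_encMatQ,
      numRep_append]
    push_cast
    rfl

theorem mpo_pcpTensor {S : Type*} (b : ℕ) (e : S ≃ Fin b) {d : ℕ} (u v : Fin d → List S)
    (lam : ℚ) (n : ℕ) :
    mpo bndL (bndR lam) (pcpTensor b e u v) n = diagonal fun w =>
      ((numRep b e ((List.ofFn w).map u).flatten : ℚ)
        - numRep b e ((List.ofFn w).map v).flatten) ^ 2 - (lam + 1) := by
  rw [mpo_eq_diagonal _ _ (pcpTensor b e u v) fun α β h => if_neg h]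
  congr 1
  ext w
  simp only [pcpTensor, if_true]
  rw [← Function.comp_def, ← List.map_ofFn, bndL_vecMul_prod_encMatQ, quadVec_dotProduct_bndR]

theorem reduction_correct_bounded_general {S : Type*} {b d : ℕ} (e : S ≃ Fin b)
    (u v : Fin d → List S) (lam : ℚ) (n : ℕ) :
    (∀ x : (Fin n → Fin d) → ℚ,
        0 ≤ x ⬝ᵥ ((mpo bndL (bndR lam) (pcpTensor b e u v) n + lam • 1).mulVec x))
      ↔ ¬ ∃ w : Fin n → Fin d,
          ((List.ofFn w).map u).flatten = ((List.ofFn w).map v).flatten := by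
  have hop : mpo bndL (bndR lam) (pcpTensor b e u v) n + lam • 1 = diagonal fun w =>
      ((numRep b e ((List.ofFn w).map u).flatten : ℚ)
        - numRep b e ((List.ofFn w).map v).flatten) ^ 2 - 1 := by
    rw [mpo_pcpTensor, ← diagonal_one, ← diagonal_smul, diagonal_add]
    congr 1
    ext w
    simp only [Pi.smul_apply, smul_eq_mul, mul_one]
    ring
  rw [hop, forall_dotProduct_diagonal_mulVec_nonneg_iff, not_exists]
  exact forall_congr' fun w => by
    rw [sq_natCast_sub_sub_one_nonneg_iff, (numRep_injective e).ne_iff]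

open Matrix in
/-- Correctness of the reduction underlying Theorem 1: for the MPO built from the
Lemma-1 encoding of a PCP instance `(u_α, v_α)_{α∈[d]}` and threshold `λ ∈ ℚ`, and
for every system size `n ≥ 1`, the operator `ρ(L,M,R,n) + λ𝟙` on `(ℚ^d)^{⊗n}` is
positive semidefinite if and only if there is no word `w ∈ [d]^n` with `U(w) = V(w)`. -/
theorem reduction_correct_bounded {S : Type*} {b d : ℕ} (hb : 1 ≤ b) (e : S ≃ Fin b)
    (u v : Fin d → List S) (lam : ℚ) (n : ℕ) (hn : 1 ≤ n) :
    (∀ x : (Fin n → Fin d) → ℚ,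
        0 ≤ x ⬝ᵥ ((mpo bndL (bndR lam) (pcpTensor b e u v) n + lam • 1).mulVec x))
      ↔ ¬ ∃ w : Fin n → Fin d,
          ((List.ofFn w).map u).flatten = ((List.ofFn w).map v).flatten :=
  reduction_correct_bounded_general e u v lam n
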